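/- Let S be a group, n a positive integer, and T a subgroup of Sym(Fin n). Let L and L' be subgroups of S that are not conjugate in S (there is no g ∈ S with g⁻¹Lg = L'). Then the subgroups L ≀ T and L' ≀ T of the wreath product S ≀ T = (Fin n → S) ⋊ T are not conjugate in S ≀ T. -/

import Mathlib

/-- The coordinate-permutation action of `Equiv.Perm α` on `α → S`:
`(σ • f) i = f (σ⁻¹ i)`. -/
def permMulAut (S : Type*) [Group S] (α : Type*) : Equiv.Perm α →* MulAut (α → S) where
  toFun σ :=
    { toFun := fun f => f ∘ σ.symm
      invFun := fun f => f ∘ σ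
      left_inv := fun f => by ext i; simp
      right_inv := fun f => by ext i; simp
      map_mul' := fun f g => rfl }
  map_one' := by ext f i; rfl
  map_mul' := fun σ τ => by ext f i; rfl

/-- The wreath product `S ≀ T` for `T` a subgroup of `Equiv.Perm α`, i.e. the semidirect
product `(α → S) ⋊ T` where `T` permutes coordinates. -/
def Wreath (S : Type*) [Group S] {α : Type*} (T : Subgroup (Equiv.Perm α)) : Type _ :=
  (α → S) ⋊[(permMulAut S α).comp T.subtype] T

instance (S : Type*) [Group S] {α : Type*} (T : Subgroup (Equiv.Perm α)) :
    Group (Wreath S T) :=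
  inferInstanceAs (Group ((α → S) ⋊[(permMulAut S α).comp T.subtype] T))

/-- The subgroup `L ≀ T` of `S ≀ T`: pairs `(f, t)` with all values of `f` in `L`. -/
def wreathSub {S : Type*} [Group S] {α : Type*} (L : Subgroup S)
    (T : Subgroup (Equiv.Perm α)) : Subgroup (Wreath S T) where
  carrier := {g : (α → S) ⋊[(permMulAut S α).comp T.subtype] T | ∀ i, g.left i ∈ L}
  one_mem' := fun i => by
    show (1 : (α → S) ⋊[(permMulAut S α).comp T.subtype] T).left i ∈ L
    simpa using one_mem L
  mul_mem' := by
    intro a b ha hb i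
    show (a * b).left i ∈ L
    erw [SemidirectProduct.mul_left]
    exact mul_mem (ha i) (hb _)
  inv_mem' := by
    intro a ha i
    show (a⁻¹).left i ∈ L
    erw [SemidirectProduct.inv_left]
    exact inv_mem (ha _)

/-! Conjugating a base element `a : α → S` by `w = (f, t)` gives `i ↦ f i * a (t⁻¹ i) * (f i)⁻¹`.
Applied to constant functions, `w (L ≀ T) w⁻¹ ≤ L' ≀ T` forces `f i L (f i)⁻¹ ≤ L'` for every `i`.
Running the same argument with `w⁻¹`, whose coordinate at `t⁻¹ i` is `(f i)⁻¹`, gives the reverse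
inclusion, so `f i` conjugates `L` onto `L'`. -/

theorem Subgroup.map_conj_inv_eq_of_map_conj_eq {G : Type*} [Group G] {H K : Subgroup G} {g : G}
    (h : H.map (MulAut.conj g).toMonoidHom = K) :
    K.map (MulAut.conj g⁻¹).toMonoidHom = H := by
  rw [← h, Subgroup.map_map]
  convert H.map_id
  ext x
  simp [mul_assoc]

theorem Subgroup.map_conj_eq_of_le_of_le {G : Type*} [Group G] {H K : Subgroup G} {g : G}
    (h₁ : H.map (MulAut.conj g).toMonoidHom ≤ K)
    (h₂ : K.map (MulAut.conj g⁻¹).toMonoidHom ≤ H) :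
    H.map (MulAut.conj g).toMonoidHom = K := by
  refine le_antisymm h₁ ?_
  rwa [Subgroup.map_le_iff_le_comap, Subgroup.comap_equiv_eq_map_symm', map_inv,
    MulAut.inv_symm] at h₂

namespace Wreath

variable {S : Type*} [Group S] {α : Type*} {T : Subgroup (Equiv.Perm α)}

theorem inv_left_apply (w : Wreath S T) (i : α) :
    (w⁻¹).left i = (w.left ((w.right : Equiv.Perm α) i))⁻¹ := rfl

theorem conj_inl_left (w : Wreath S T) (a : α → S) (i : α) :
    (MulAut.conj w (SemidirectProduct.inl a)).left i
      = w.left i * a ((w.right : Equiv.Perm α)⁻¹ i) * (w.left i)⁻¹ := by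
  change w.left i * a ((w.right : Equiv.Perm α)⁻¹ i) * (w⁻¹).left ((w.right : Equiv.Perm α)⁻¹ i)
    = _
  simp [inv_left_apply]

theorem map_conj_left_le_of_map_conj_wreathSub_le {L L' : Subgroup S} {w : Wreath S T}
    (h : (wreathSub L T).map (MulAut.conj w).toMonoidHom ≤ wreathSub L' T) (i : α) :
    L.map (MulAut.conj (w.left i)).toMonoidHom ≤ L' := by
  rintro _ ⟨s, hs, rfl⟩
  have hconst : (SemidirectProduct.inl (fun _ => s) : Wreath S T) ∈ wreathSub L T :=
    fun _ => hs
  simpa only [MulEquiv.coe_toMonoidHom, conj_inl_left, MulAut.conj_apply] using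
    h ⟨_, hconst, rfl⟩ i

end Wreath

/-- If `L` and `L'` are non-conjugate subgroups of `S`, then `L ≀ T` and `L' ≀ T` are
non-conjugate subgroups of the wreath product `S ≀ T`. -/
theorem wreathSub_not_conjugate {S : Type*} [Group S] (L L' : Subgroup S)
    (n : ℕ) (hn : 0 < n) (T : Subgroup (Equiv.Perm (Fin n)))
    (hnc : ¬ ∃ g : S, Subgroup.map (MulAut.conj g).toMonoidHom L = L') :
    ¬ ∃ w : Wreath S T,
        Subgroup.map (MulAut.conj w).toMonoidHom (wreathSub L T) = wreathSub L' T := by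
  rintro ⟨w, hw⟩
  let i₀ : Fin n := ⟨0, hn⟩
  have hle := Wreath.map_conj_left_le_of_map_conj_wreathSub_le hw.le i₀
  have hge := Wreath.map_conj_left_le_of_map_conj_wreathSub_le
    (Subgroup.map_conj_inv_eq_of_map_conj_eq hw).le ((w.right : Equiv.Perm (Fin n))⁻¹ i₀)
  simp only [Wreath.inv_left_apply, Equiv.Perm.coe_inv, Equiv.apply_symm_apply] at hge
  exact hnc ⟨w.left i₀, Subgroup.map_conj_eq_of_le_of_le hle hge⟩
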